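/- Let n ≥ 2, x ∈ ℂⁿ, and B_x := C_x* C_x. The following are equivalent: (i) for every n-th root of unity t ≠ 1, |c(t)| < |c(1)|, where c(t) = x_0 + x_1 t + ⋯ + x_{n-1} t^{n-1}; (ii) there exists m ≥ 1 such that the first row of B_xᵐ contains two cyclically adjacent nonzero entries and every nonzero entry of that row has principal argument of absolute value less than π/(2n); (iii) there exists m ≥ 1 such that all entries of the first row of B_xᵐ are nonzero with principal argument of absolute value less than π/(2n); (iv) there exists m₀ ∈ ℕ such that for all m ≥ m₀ all entries of the first row of B_xᵐ are nonzero with principal argument of absolute value less than π/(2n). -/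

import Mathlib

open Matrix

/-- The `n × n` complex circulant matrix whose `(j,k)` entry is `x ((k - j) mod n)`. -/
noncomputable def circulantC {n : ℕ} (x : Fin n → ℂ) : Matrix (Fin n) (Fin n) ℂ :=
  Matrix.of fun j k => x (k - j)

/-- The symbol `c(t) = x₀ + x₁ t + ⋯ + x_{n-1} t^{n-1}` of the circulant matrix `C_x`. -/
noncomputable def symbolC {n : ℕ} (x : Fin n → ℂ) (t : ℂ) : ℂ :=
  ∑ j : Fin n, x j * t ^ (j : ℕ)

namespace S16
variable {n : ℕ}

lemma pow_val_mod {t : ℂ} (ht : t ^ n = 1) (a : ℕ) : t ^ (a % n) = t ^ a := by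
  conv_rhs => rw [← Nat.mod_add_div a n]
  rw [pow_add, pow_mul, ht, one_pow, mul_one]

lemma pow_fin_add {t : ℂ} (ht : t ^ n = 1) (a b : Fin n) :
    t ^ ((a + b : Fin n) : ℕ) = t ^ (a : ℕ) * t ^ (b : ℕ) := by
  rw [Fin.val_add, pow_val_mod ht, pow_add]

lemma abs_eq_one' {t : ℂ} (hn : 0 < n) (ht : t ^ n = 1) : ‖t‖ = 1 := by
  have h : ‖t‖ ^ n = 1 := by
    rw [← norm_pow, ht]; exact norm_one
  rcases lt_trichotomy (‖t‖) 1 with h1 | h1 | h1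
  · exact absurd h (by have := pow_lt_one₀ (norm_nonneg t) h1 hn.ne'; linarith)
  · exact h1
  · exact absurd h (by have := one_lt_pow₀ h1 hn.ne'; linarith)

lemma mulVec_e (hn : 0 < n) {x : Fin n → ℂ} {t : ℂ} (ht : t ^ n = 1) :
    (circulantC x) *ᵥ (fun j : Fin n => t ^ (j : ℕ))
      = symbolC x t • (fun j : Fin n => t ^ (j : ℕ)) := by
  haveI : NeZero n := ⟨hn.ne'⟩
  funext j
  have h1 : ∀ l : Fin n, circulantC x j (l + j) * t ^ ((l + j : Fin n) : ℕ)
      = x l * t ^ (l : ℕ) * t ^ (j : ℕ) := by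
    intro l
    rw [pow_fin_add ht]
    simp only [circulantC, Matrix.of_apply, add_sub_cancel_right]
    ring
  calc (circulantC x *ᵥ fun j : Fin n => t ^ (j : ℕ)) j
      = ∑ k : Fin n, circulantC x j k * t ^ (k : ℕ) := rfl
    _ = ∑ l : Fin n, circulantC x j (l + j) * t ^ ((l + j : Fin n) : ℕ) :=
        (Fintype.sum_equiv (Equiv.addRight j) _ _ (fun l => rfl)).symm
    _ = ∑ l : Fin n, x l * t ^ (l : ℕ) * t ^ (j : ℕ) := by simp_rw [h1]
    _ = symbolC x t * t ^ (j : ℕ) := by rw [← Finset.sum_mul]; rfl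
    _ = (symbolC x t • fun j : Fin n => t ^ (j : ℕ)) j := rfl

lemma mulVec_e_conj (hn : 0 < n) {x : Fin n → ℂ} {t : ℂ} (ht : t ^ n = 1) :
    (circulantC x)ᴴ *ᵥ (fun j : Fin n => t ^ (j : ℕ))
      = (starRingEnd ℂ) (symbolC x t) • (fun j : Fin n => t ^ (j : ℕ)) := by
  have htz : t ≠ 0 := by
    intro h; rw [h, zero_pow hn.ne'] at ht; exact zero_ne_one ht
  haveI : NeZero n := ⟨hn.ne'⟩
  have hconj : ∀ a : ℕ, (starRingEnd ℂ) (t ^ a) = (t ^ a)⁻¹ := by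
    intro a
    rw [Complex.inv_eq_conj]
    rw [norm_pow, abs_eq_one' hn ht, one_pow]
  funext j
  have h1 : ∀ l : Fin n, (circulantC x)ᴴ j (j - l) * t ^ ((j - l : Fin n) : ℕ)
      = (starRingEnd ℂ) (x l * t ^ (l : ℕ)) * t ^ (j : ℕ) := by
    intro l
    have h2 : t ^ ((j - l : Fin n) : ℕ) * t ^ (l : ℕ) = t ^ (j : ℕ) := by
      rw [← pow_fin_add ht, sub_add_cancel]
    have h3 : t ^ ((j - l : Fin n) : ℕ) = (t ^ (l : ℕ))⁻¹ * t ^ (j : ℕ) := by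
      field_simp [← h2, mul_comm]
      exact h2
    rw [h3]
    simp only [circulantC, conjTranspose_apply, Matrix.of_apply, sub_sub_cancel,
      _root_.map_mul, hconj, Complex.star_def]
    ring
  calc ((circulantC x)ᴴ *ᵥ fun j : Fin n => t ^ (j : ℕ)) j
      = ∑ k : Fin n, (circulantC x)ᴴ j k * t ^ (k : ℕ) := rfl
    _ = ∑ l : Fin n, (circulantC x)ᴴ j (j - l) * t ^ ((j - l : Fin n) : ℕ) :=
        (Fintype.sum_equiv (Equiv.subLeft j) _ _ (fun l => rfl)).symm
    _ = ∑ l : Fin n, (starRingEnd ℂ) (x l * t ^ (l : ℕ)) * t ^ (j : ℕ) := by simp_rw [h1]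
    _ = (starRingEnd ℂ) (symbolC x t) * t ^ (j : ℕ) := by
        rw [← Finset.sum_mul, ← map_sum]; rfl

lemma mulVec_B_pow (hn : 0 < n) {x : Fin n → ℂ} (m : ℕ) {t : ℂ} (ht : t ^ n = 1) :
    ((circulantC x)ᴴ * circulantC x) ^ m *ᵥ (fun j : Fin n => t ^ (j : ℕ))
      = ((Complex.normSq (symbolC x t) : ℂ)) ^ m • (fun j : Fin n => t ^ (j : ℕ)) := by
  induction m with
  | zero => simp
  | succ m ih =>
    rw [pow_succ, ← mulVec_mulVec, ← mulVec_mulVec, mulVec_e hn ht, mulVec_smul,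
      mulVec_e_conj hn ht, smul_smul, mulVec_smul, ih, smul_smul, pow_succ]
    congr 1
    rw [← Complex.mul_conj (symbolC x t)]
    ring

lemma key (hn : 0 < n) {x : Fin n → ℂ} (m : ℕ) {t : ℂ} (ht : t ^ n = 1) (h0 : Fin n)
    (hh0 : (h0 : ℕ) = 0) :
    ∑ j : Fin n, (((circulantC x)ᴴ * circulantC x) ^ m) h0 j * t ^ (j : ℕ)
      = ((Complex.normSq (symbolC x t) : ℂ)) ^ m := by
  have := congrFun (mulVec_B_pow hn (x := x) m ht) h0
  simp only [Pi.smul_apply, smul_eq_mul, hh0, pow_zero, mul_one] at this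
  exact this

lemma arg_root_lb (hn2 : 2 ≤ n) {u : ℂ} (hu : u ^ n = 1) (hu1 : u ≠ 1) :
    2 * Real.pi / n ≤ |Complex.arg u| := by
  have hn : 0 < n := by omega
  have habs : ‖u‖ = 1 := abs_eq_one' hn hu
  have hexp : Complex.exp (↑(Complex.arg u) * Complex.I) = u := by
    have := Complex.norm_mul_exp_arg_mul_I u
    rwa [habs, Complex.ofReal_one, one_mul] at this
  have hpow : Complex.exp ((n : ℂ) * (↑(Complex.arg u) * Complex.I)) = 1 := by
    rw [Complex.exp_nat_mul, hexp, hu]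
  obtain ⟨k, hk⟩ := Complex.exp_eq_one_iff.mp hpow
  have hreal : (n : ℝ) * Complex.arg u = (k : ℝ) * (2 * Real.pi) := by
    have h2 : ((n * Complex.arg u : ℝ) : ℂ) * Complex.I
        = (((k : ℝ) * (2 * Real.pi) : ℝ) : ℂ) * Complex.I := by
      push_cast
      linear_combination hk
    have h3 := mul_right_cancel₀ Complex.I_ne_zero h2
    exact_mod_cast h3
  have hk0 : k ≠ 0 := by
    intro h0
    have hz : (n : ℝ) * Complex.arg u = 0 := by rw [h0] at hreal; simpa using hreal
    have harg0 : Complex.arg u = 0 :=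
      (mul_eq_zero.mp hz).resolve_left (by positivity : (0:ℝ) < (n:ℝ)).ne'
    rw [harg0] at hexp
    simp at hexp
    exact hu1 hexp.symm
  have hk1 : (1 : ℝ) ≤ |(k : ℝ)| := by
    have : (1 : ℤ) ≤ |k| := Int.one_le_abs hk0
    calc (1:ℝ) = ((1:ℤ):ℝ) := by norm_num
      _ ≤ ((|k|:ℤ):ℝ) := by exact_mod_cast this
      _ = |(k:ℝ)| := by push_cast; ring
  have h5 : (n : ℝ) * |Complex.arg u| = |(k : ℝ)| * (2 * Real.pi) := by
    rw [← _root_.abs_of_nonneg (by positivity : (0:ℝ) ≤ (n:ℝ)), ← abs_mul, hreal, abs_mul,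
      _root_.abs_of_nonneg (by positivity : (0:ℝ) ≤ 2 * Real.pi)]
  have hnR : (2 : ℝ) ≤ (n : ℝ) := by exact_mod_cast hn2
  rw [div_le_iff₀ (by linarith)]
  nlinarith [Real.pi_pos]

lemma term_lt (hn2 : 2 ≤ n) {b u : ℂ} (hb : b ≠ 0)
    (harg : |Complex.arg b| < Real.pi / (2 * n)) (hu : u ^ n = 1) (hu1 : u ≠ 1) :
    (b * u).re < b.re := by
  have hn : 0 < n := by omega
  have hnR : (2 : ℝ) ≤ (n : ℝ) := by exact_mod_cast hn2
  have hπ := Real.pi_pos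
  set θ := Complex.arg b with hθdef
  set φ := Complex.arg u with hφdef
  set ρ := ‖b‖ with hρdef
  have hρ : 0 < ρ := norm_pos_iff.mpr hb
  have hbe : (↑ρ : ℂ) * Complex.exp (↑θ * Complex.I) = b := Complex.norm_mul_exp_arg_mul_I b
  have hue : Complex.exp (↑φ * Complex.I) = u := by
    have := Complex.norm_mul_exp_arg_mul_I u
    rwa [abs_eq_one' hn hu, Complex.ofReal_one, one_mul] at this
  have hmul : b * u = (↑ρ : ℂ) * Complex.exp (↑(θ + φ) * Complex.I) := by
    rw [← hbe, ← hue]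
    have h2 : (↑(θ + φ) : ℂ) * Complex.I = ↑θ * Complex.I + ↑φ * Complex.I := by
      push_cast; ring
    rw [h2, Complex.exp_add]; ring
  have hre1 : (b * u).re = ρ * Real.cos (θ + φ) := by
    rw [hmul, Complex.re_ofReal_mul, Complex.exp_ofReal_mul_I_re]
  have hre2 : b.re = ρ * Real.cos θ := by
    rw [← hbe, Complex.re_ofReal_mul, Complex.exp_ofReal_mul_I_re]
  have hφ1 : 2 * Real.pi / n ≤ |φ| := arg_root_lb hn2 hu hu1
  have hφ2 : |φ| ≤ Real.pi := Complex.abs_arg_le_pi u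
  have hcosθ : Real.cos (Real.pi / (2 * n)) < Real.cos θ := by
    rw [← Real.cos_abs θ]
    apply Real.cos_lt_cos_of_nonneg_of_le_pi (abs_nonneg θ) _ harg
    rw [div_le_iff₀ (by linarith)]
    nlinarith
  have hcos2 : Real.cos (3 * Real.pi / (2 * n)) < Real.cos (Real.pi / (2 * n)) := by
    apply Real.cos_lt_cos_of_nonneg_of_le_pi (by positivity)
    · rw [div_le_iff₀ (by linarith)]; nlinarith
    · rw [div_lt_div_iff₀ (by linarith) (by linarith)]; nlinarith
  have hl1 : 3 * Real.pi / (2 * n) < |θ + φ| := by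
    have habs1 : |φ| ≤ |θ + φ| + |θ| := by
      calc |φ| = |θ + φ - θ| := by ring_nf
        _ ≤ |θ + φ| + |θ| := abs_sub _ _
    have h2n : 2 * Real.pi / (n:ℝ) - Real.pi / (2*n) = 3 * Real.pi / (2 * n) := by
      field_simp; ring
    linarith [harg, hφ1]
  have hl2 : |θ + φ| < Real.pi + Real.pi / (2 * n) := by
    calc |θ + φ| ≤ |θ| + |φ| := abs_add_le _ _
      _ < Real.pi / (2 * n) + Real.pi := by linarith
      _ = Real.pi + Real.pi / (2 * n) := by ring
  have hkey : Real.cos (θ + φ) ≤ Real.cos (3 * Real.pi / (2 * n)) := by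
    rcases le_or_gt (|θ + φ|) Real.pi with hcase | hcase
    · rw [← Real.cos_abs (θ + φ)]
      exact Real.cos_le_cos_of_nonneg_of_le_pi (by positivity) hcase hl1.le
    · rw [← Real.cos_abs (θ + φ), ← Real.cos_two_pi_sub]
      apply Real.cos_le_cos_of_nonneg_of_le_pi (by positivity)
      · linarith
      · have : 3 * Real.pi / (2*n) + Real.pi / (2*n) = 2 * Real.pi / n := by
          field_simp; ring
        have hlow : 2 * Real.pi / (n:ℝ) ≤ Real.pi := by
          rw [div_le_iff₀ (by linarith)]; nlinarith
        linarith
  rw [hre1, hre2]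
  have : Real.cos (θ + φ) < Real.cos θ := lt_of_le_of_lt hkey (lt_trans hcos2 hcosθ)
  nlinarith

lemma disc_lemma {c α : ℝ} (hc : 0 < c) (hα : 0 < α) (hα2 : α ≤ Real.pi / 2) (z : ℂ)
    (hz : ‖z - (c : ℂ)‖ < c * Real.sin α / 2) :
    z ≠ 0 ∧ |Complex.arg z| < α := by
  have hπ := Real.pi_pos
  have hs0 : 0 < Real.sin α := Real.sin_pos_of_pos_of_lt_pi hα (by linarith)
  have hs1 : Real.sin α ≤ 1 := Real.sin_le_one α
  have hd : ‖z - (c : ℂ)‖ < c / 2 := by nlinarith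
  have hre : c / 2 < z.re := by
    have h1 : |(z - (c : ℂ)).re| ≤ ‖z - (c : ℂ)‖ := Complex.abs_re_le_norm _
    have h2 : (z - (c : ℂ)).re = z.re - c := by simp
    rw [h2] at h1
    have := abs_le.mp h1
    linarith [this.1]
  have hrepos : 0 < z.re := by linarith
  have hz0 : z ≠ 0 := fun h => by rw [h] at hrepos; simp at hrepos
  have him : |z.im| < c * Real.sin α / 2 := by
    have h2 : (z - (c : ℂ)).im = z.im := by simp
    calc |z.im| = |(z - (c : ℂ)).im| := by rw [h2]
      _ ≤ ‖z - (c : ℂ)‖ := Complex.abs_im_le_norm _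
      _ < c * Real.sin α / 2 := hz
  have habsz : c / 2 < ‖z‖ := lt_of_lt_of_le hre (Complex.re_le_norm z)
  have hsinlt : |Real.sin (Complex.arg z)| < Real.sin α := by
    rw [Complex.sin_arg, abs_div, _root_.abs_of_nonneg (norm_nonneg z),
      div_lt_iff₀ (by linarith)]
    nlinarith
  have hhalf : |Complex.arg z| < Real.pi / 2 :=
    Complex.abs_arg_lt_pi_div_two_iff.mpr (Or.inl hrepos)
  refine ⟨hz0, ?_⟩
  by_contra hcon
  push_neg at hcon
  have hsinabs : Real.sin |Complex.arg z| = |Real.sin (Complex.arg z)| := by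
    rcases le_or_gt 0 (Complex.arg z) with h | h
    · rw [_root_.abs_of_nonneg h, _root_.abs_of_nonneg]
      apply Real.sin_nonneg_of_nonneg_of_le_pi h
      have := (abs_le.mp hhalf.le).2
      linarith
    · rw [_root_.abs_of_nonpos h.le, Real.sin_neg, _root_.abs_of_nonpos]
      have h2 := (abs_le.mp hhalf.le).1
      apply Real.sin_nonpos_of_nonpos_of_neg_pi_le h.le
      linarith
  have hmono : Real.sin α ≤ Real.sin |Complex.arg z| := by
    apply Real.strictMonoOn_sin.monotoneOn _ _ hcon
    · constructor <;> [linarith; linarith]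
    · have := abs_nonneg (Complex.arg z)
      constructor <;> [linarith; linarith]
  rw [hsinabs] at hmono
  linarith

end S16

theorem stmt16 (n : ℕ) (hn : 2 ≤ n) (x : Fin n → ℂ) :
    List.TFAE
      [∀ t : ℂ, t ^ n = 1 → t ≠ 1 →
          ‖symbolC x t‖ < ‖symbolC x 1‖,
        ∃ m : ℕ, 1 ≤ m ∧
          (∃ k : Fin n,
            (((circulantC x)ᴴ * circulantC x) ^ m) ⟨0, by omega⟩ k ≠ 0 ∧
            (((circulantC x)ᴴ * circulantC x) ^ m) ⟨0, by omega⟩ (k + ⟨1, by omega⟩) ≠ 0) ∧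
          ∀ j : Fin n,
            (((circulantC x)ᴴ * circulantC x) ^ m) ⟨0, by omega⟩ j ≠ 0 →
            |Complex.arg ((((circulantC x)ᴴ * circulantC x) ^ m) ⟨0, by omega⟩ j)| <
              Real.pi / (2 * n),
        ∃ m : ℕ, 1 ≤ m ∧
          ∀ j : Fin n,
            (((circulantC x)ᴴ * circulantC x) ^ m) ⟨0, by omega⟩ j ≠ 0 ∧
            |Complex.arg ((((circulantC x)ᴴ * circulantC x) ^ m) ⟨0, by omega⟩ j)| <
              Real.pi / (2 * n),
        ∃ m₀ : ℕ, ∀ m ≥ m₀,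
          ∀ j : Fin n,
            (((circulantC x)ᴴ * circulantC x) ^ m) ⟨0, by omega⟩ j ≠ 0 ∧
            |Complex.arg ((((circulantC x)ᴴ * circulantC x) ^ m) ⟨0, by omega⟩ j)| <
              Real.pi / (2 * n)] := by
  have hn0 : 0 < n := by omega
  tfae_have 4 → 3
  · rintro ⟨m₀, h⟩
    exact ⟨max m₀ 1, le_max_right _ _, fun j => h _ (le_max_left _ _) j⟩
  tfae_have 3 → 2
  · rintro ⟨m, hm, h⟩
    exact ⟨m, hm, ⟨⟨0, by omega⟩, (h _).1, (h _).1⟩, fun j _ => (h j).2⟩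
  tfae_have 2 → 1
  · rintro ⟨m, hm, ⟨k, hk1, hk2⟩, hargs⟩ t ht ht1
    have htj_root : ∀ j : Fin n, (t ^ (j : ℕ)) ^ n = 1 := by
      intro j; rw [← pow_mul, mul_comm, pow_mul, ht, one_pow]
    have hstrict : ∃ j : Fin n,
        (((circulantC x)ᴴ * circulantC x) ^ m) ⟨0, by omega⟩ j ≠ 0 ∧ t ^ (j : ℕ) ≠ 1 := by
      by_cases htk : t ^ ((k : Fin n) : ℕ) = 1
      · refine ⟨k + ⟨1, by omega⟩, hk2, ?_⟩
        rw [S16.pow_fin_add ht, htk, one_mul]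
        simpa using ht1
      · exact ⟨k, hk1, htk⟩
    have hlt : ∑ j : Fin n, ((((circulantC x)ᴴ * circulantC x) ^ m) ⟨0, by omega⟩ j
          * t ^ (j : ℕ)).re
        < ∑ j : Fin n, ((((circulantC x)ᴴ * circulantC x) ^ m) ⟨0, by omega⟩ j).re := by
      obtain ⟨j₀, hj₀, hj₀t⟩ := hstrict
      apply Finset.sum_lt_sum
      · intro j _
        by_cases hbj : (((circulantC x)ᴴ * circulantC x) ^ m) ⟨0, by omega⟩ j = 0
        · simp [hbj]
        by_cases htj : t ^ (j : ℕ) = 1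
        · rw [htj, mul_one]
        · exact (S16.term_lt hn hbj (hargs j hbj) (htj_root j) htj).le
      · exact ⟨j₀, Finset.mem_univ _, S16.term_lt hn hj₀ (hargs j₀ hj₀) (htj_root j₀) hj₀t⟩
    have hSt := S16.key hn0 (x := x) m ht (⟨0, by omega⟩ : Fin n) rfl
    have hS1 := S16.key hn0 (x := x) m (one_pow n) (⟨0, by omega⟩ : Fin n) rfl
    have hre_t : ∑ j : Fin n, ((((circulantC x)ᴴ * circulantC x) ^ m) ⟨0, by omega⟩ j
          * t ^ (j : ℕ)).re
        = (Complex.normSq (symbolC x t)) ^ m := by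
      rw [← Complex.re_sum, hSt, ← Complex.ofReal_pow, Complex.ofReal_re]
    have hre_1 : ∑ j : Fin n, ((((circulantC x)ᴴ * circulantC x) ^ m) ⟨0, by omega⟩ j).re
        = (Complex.normSq (symbolC x 1)) ^ m := by
      rw [← Complex.re_sum]
      simp only [one_pow, mul_one] at hS1
      rw [hS1, ← Complex.ofReal_pow, Complex.ofReal_re]
    rw [hre_t, hre_1] at hlt
    have hns : Complex.normSq (symbolC x t) < Complex.normSq (symbolC x 1) := by
      by_contra hc
      push_neg at hc
      exact absurd hlt (not_lt.mpr (pow_le_pow_left₀ (Complex.normSq_nonneg _) hc m))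
    rw [Complex.norm_def, Complex.norm_def]
    exact Real.sqrt_lt_sqrt (Complex.normSq_nonneg _) hns
  tfae_have 1 → 4
  · intro h1
    have hπ := Real.pi_pos
    have hnR : (2 : ℝ) ≤ (n : ℝ) := by exact_mod_cast hn
    have hα : 0 < Real.pi / (2 * (n:ℝ)) := by positivity
    have hα2 : Real.pi / (2 * (n:ℝ)) ≤ Real.pi / 2 := by
      rw [div_le_div_iff₀ (by linarith) (by linarith)]
      nlinarith
    have hsin : 0 < Real.sin (Real.pi / (2 * (n:ℝ))) :=
      Real.sin_pos_of_pos_of_lt_pi hα (by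
        rw [div_lt_iff₀ (by linarith)]
        nlinarith)
    set ω := Complex.exp (2 * Real.pi * Complex.I / n) with hωdef
    have hprim : IsPrimitiveRoot ω n := Complex.isPrimitiveRoot_exp n hn0.ne'
    have hωn : ω ^ n = 1 := hprim.pow_eq_one
    have hpow_root : ∀ s : ℕ, (ω ^ s) ^ n = 1 := fun s => by
      rw [← pow_mul, mul_comm, pow_mul, hωn, one_pow]
    have hc1 : symbolC x 1 ≠ 0 := by
      intro hc
      have h2 := h1 ω (by simpa using hpow_root 1) (hprim.ne_one (by omega))
      rw [hc] at h2
      simp only [norm_zero] at h2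
      exact absurd h2 (norm_nonneg _).not_gt
    have hA : 0 < Complex.normSq (symbolC x 1) := Complex.normSq_pos.mpr hc1
    haveI : NeZero n := ⟨hn0.ne'⟩
    have h1T : (⟨1, by omega⟩ : Fin n) ∈ Finset.univ.erase (0 : Fin n) :=
      Finset.mem_erase.mpr ⟨by simp [Fin.ext_iff], Finset.mem_univ _⟩
    have hTne : (Finset.univ.erase (0 : Fin n)).Nonempty := ⟨_, h1T⟩
    set q := (Finset.univ.erase (0 : Fin n)).sup' hTne
      (fun s => Complex.normSq (symbolC x (ω ^ (s : ℕ)))) with hqdef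
    have hq_lt : q < Complex.normSq (symbolC x 1) := by
      rw [hqdef, Finset.sup'_lt_iff]
      intro s hs
      have hs0 : (s : ℕ) ≠ 0 := fun h0 => (Finset.mem_erase.mp hs).1 (Fin.ext h0)
      have hω1 : ω ^ (s : ℕ) ≠ 1 :=
        hprim.pow_ne_one_of_pos_of_lt hs0 s.isLt
      have hlt := h1 (ω ^ (s : ℕ)) (hpow_root _) hω1
      rw [← Complex.sq_norm, ← Complex.sq_norm (symbolC x 1)]
      exact pow_lt_pow_left₀ hlt (norm_nonneg _) two_ne_zero
    have hq0 : 0 ≤ q := by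
      rw [hqdef]
      exact le_trans (Complex.normSq_nonneg (symbolC x (ω ^ (((⟨1, by omega⟩ : Fin n)) : ℕ))))
        (Finset.le_sup' (fun s : Fin n => Complex.normSq (symbolC x (ω ^ (s : ℕ)))) h1T)
    have hr0 : 0 ≤ q / Complex.normSq (symbolC x 1) := div_nonneg hq0 hA.le
    have hr1 : q / Complex.normSq (symbolC x 1) < 1 := (div_lt_one hA).mpr hq_lt
    have hε : 0 < Real.sin (Real.pi / (2 * (n:ℝ))) / (2 * n) := by positivity
    obtain ⟨m₀, hm₀⟩ := Filter.eventually_atTop.mp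
      ((tendsto_pow_atTop_nhds_zero_of_lt_one hr0 hr1).eventually_lt_const hε)
    refine ⟨m₀, fun m hm j => ?_⟩
    have hω0 : ω ≠ 0 := fun h => by
      rw [h, zero_pow hn0.ne'] at hωn; exact zero_ne_one hωn
    have hμ : (starRingEnd ℂ) ω = ω⁻¹ :=
      (Complex.inv_eq_conj (by rw [S16.abs_eq_one' hn0 hωn])).symm
    have hμn : ((starRingEnd ℂ) ω) ^ n = 1 := by
      rw [← map_pow, hωn]
      exact map_one (starRingEnd ℂ)
    -- the inversion identity
    have hinv : ∑ s : Fin n, ((Complex.normSq (symbolC x (ω ^ (s : ℕ))) : ℂ)) ^ m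
          * ((starRingEnd ℂ) ω) ^ ((s : ℕ) * (j : ℕ))
        = (n : ℂ) * (((circulantC x)ᴴ * circulantC x) ^ m) ⟨0, by omega⟩ j := by
      have hkey_s : ∀ s : Fin n, ((Complex.normSq (symbolC x (ω ^ (s : ℕ))) : ℂ)) ^ m
          = ∑ l : Fin n, (((circulantC x)ᴴ * circulantC x) ^ m) ⟨0, by omega⟩ l
              * (ω ^ (s : ℕ)) ^ (l : ℕ) :=
        fun s => (S16.key hn0 m (hpow_root (s : ℕ)) (⟨0, by omega⟩ : Fin n) rfl).symm
      calc ∑ s : Fin n, ((Complex.normSq (symbolC x (ω ^ (s : ℕ))) : ℂ)) ^ m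
            * ((starRingEnd ℂ) ω) ^ ((s : ℕ) * (j : ℕ))
          = ∑ s : Fin n, ∑ l : Fin n,
              (((circulantC x)ᴴ * circulantC x) ^ m) ⟨0, by omega⟩ l
              * ((ω ^ (l : ℕ) * ((starRingEnd ℂ) ω) ^ (j : ℕ)) ^ (s : ℕ)) := by
            apply Finset.sum_congr rfl
            intro s _
            rw [hkey_s s, Finset.sum_mul]
            apply Finset.sum_congr rfl
            intro l _
            rw [mul_pow, ← pow_mul, ← pow_mul, ← pow_mul]
            ring_nf
        _ = ∑ l : Fin n, (((circulantC x)ᴴ * circulantC x) ^ m) ⟨0, by omega⟩ l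
              * ∑ s : Fin n, ((ω ^ (l : ℕ) * ((starRingEnd ℂ) ω) ^ (j : ℕ)) ^ (s : ℕ)) := by
            rw [Finset.sum_comm]
            apply Finset.sum_congr rfl
            intro l _
            rw [Finset.mul_sum]
        _ = (n : ℂ) * (((circulantC x)ᴴ * circulantC x) ^ m) ⟨0, by omega⟩ j := by
            rw [Finset.sum_eq_single j]
            · have hη : ω ^ (j : ℕ) * ((starRingEnd ℂ) ω) ^ (j : ℕ) = 1 := by
                rw [hμ, inv_pow, mul_inv_cancel₀ (pow_ne_zero _ hω0)]
              rw [hη]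
              simp [mul_comm]
            · intro l _ hlj
              have hη1 : ω ^ (l : ℕ) * ((starRingEnd ℂ) ω) ^ (j : ℕ) ≠ 1 := by
                intro he
                apply hlj
                have : ω ^ (l : ℕ) = ω ^ (j : ℕ) := by
                  rw [hμ, inv_pow] at he
                  field_simp at he
                  exact he
                exact Fin.ext (hprim.pow_inj l.isLt j.isLt this)
              have hηn : (ω ^ (l : ℕ) * ((starRingEnd ℂ) ω) ^ (j : ℕ)) ^ n = 1 := by
                rw [mul_pow, ← pow_mul, mul_comm (l : ℕ) n, pow_mul, hωn, one_pow, one_mul,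
                  ← pow_mul, mul_comm (j : ℕ) n, pow_mul, hμn, one_pow]
              have hgeom : ∑ s : Fin n,
                  ((ω ^ (l : ℕ) * ((starRingEnd ℂ) ω) ^ (j : ℕ)) ^ (s : ℕ)) = 0 := by
                rw [Fin.sum_univ_eq_sum_range
                  (fun i => (ω ^ (l : ℕ) * ((starRingEnd ℂ) ω) ^ (j : ℕ)) ^ i)]
                rw [geom_sum_eq hη1, hηn]
                simp
              rw [hgeom, mul_zero]
            · intro hj
              exact absurd (Finset.mem_univ j) hj
    have hsplit : (n : ℂ) * (((circulantC x)ᴴ * circulantC x) ^ m) ⟨0, by omega⟩ j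
          - ((Complex.normSq (symbolC x 1) ^ m : ℝ) : ℂ)
        = ∑ s ∈ Finset.univ.erase (0 : Fin n),
            ((Complex.normSq (symbolC x (ω ^ (s : ℕ))) : ℂ)) ^ m
            * ((starRingEnd ℂ) ω) ^ ((s : ℕ) * (j : ℕ)) := by
      rw [← hinv, ← Finset.add_sum_erase _ _ (Finset.mem_univ (0 : Fin n))]
      have h00 : ((0 : Fin n) : ℕ) = 0 := rfl
      rw [h00]
      simp only [pow_zero, Nat.zero_mul, mul_one]
      push_cast
      ring
    have hbound : ‖(n : ℂ) * (((circulantC x)ᴴ * circulantC x) ^ m) ⟨0, by omega⟩ j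
          - ((Complex.normSq (symbolC x 1) ^ m : ℝ) : ℂ)‖
        ≤ ((n : ℝ) - 1) * q ^ m := by
      rw [hsplit]
      have hcard : (Finset.univ.erase (0 : Fin n)).card = n - 1 := by
        rw [Finset.card_erase_of_mem (Finset.mem_univ _), Finset.card_univ, Fintype.card_fin]
      calc ‖∑ s ∈ Finset.univ.erase (0 : Fin n),
              ((Complex.normSq (symbolC x (ω ^ (s : ℕ))) : ℂ)) ^ m
              * ((starRingEnd ℂ) ω) ^ ((s : ℕ) * (j : ℕ))‖
          ≤ ∑ s ∈ Finset.univ.erase (0 : Fin n), ‖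
              (((Complex.normSq (symbolC x (ω ^ (s : ℕ))) : ℂ)) ^ m
              * ((starRingEnd ℂ) ω) ^ ((s : ℕ) * (j : ℕ)))‖ :=
            norm_sum_le _ _
        _ ≤ ∑ s ∈ Finset.univ.erase (0 : Fin n), q ^ m := by
            apply Finset.sum_le_sum
            intro s hs
            have habsμ : ‖((starRingEnd ℂ) ω) ^ ((s : ℕ) * (j : ℕ))‖ = 1 := by
              rw [norm_pow, Complex.norm_conj, S16.abs_eq_one' hn0 hωn, one_pow]
            rw [norm_mul, habsμ, mul_one, norm_pow, Complex.norm_real, Real.norm_eq_abs,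
              _root_.abs_of_nonneg (Complex.normSq_nonneg _)]
            have hle : Complex.normSq (symbolC x (ω ^ (s : ℕ))) ≤ q := by
              rw [hqdef]
              exact Finset.le_sup' (fun s : Fin n => Complex.normSq (symbolC x (ω ^ (s : ℕ)))) hs
            exact pow_le_pow_left₀ (Complex.normSq_nonneg _) hle m
        _ = ((n : ℝ) - 1) * q ^ m := by
            rw [Finset.sum_const, hcard, nsmul_eq_mul]
            congr 1
            have : (1:ℝ) ≤ (n:ℝ) := by linarith
            push_cast [Nat.cast_sub (by omega : 1 ≤ n)]
            ring
    have hApos : 0 < Complex.normSq (symbolC x 1) ^ m := pow_pos hA m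
    have hrad : ((n : ℝ) - 1) * q ^ m
        < Complex.normSq (symbolC x 1) ^ m * Real.sin (Real.pi / (2 * (n:ℝ))) / 2 := by
      have hqm : q ^ m = (q / Complex.normSq (symbolC x 1)) ^ m
          * Complex.normSq (symbolC x 1) ^ m := by
        rw [div_pow]
        field_simp
      have h2 := hm₀ m hm
      have h3 : (0:ℝ) ≤ (q / Complex.normSq (symbolC x 1)) ^ m := pow_nonneg hr0 m
      rw [hqm]
      have hn1 : (0:ℝ) ≤ (n : ℝ) - 1 := by linarith
      have step : ((n : ℝ) - 1) * ((q / Complex.normSq (symbolC x 1)) ^ m)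
          < Real.sin (Real.pi / (2 * (n:ℝ))) / 2 := by
        calc ((n : ℝ) - 1) * ((q / Complex.normSq (symbolC x 1)) ^ m)
            ≤ (n : ℝ) * ((q / Complex.normSq (symbolC x 1)) ^ m) := by nlinarith
          _ < (n : ℝ) * (Real.sin (Real.pi / (2 * (n:ℝ))) / (2 * n)) := by
              apply mul_lt_mul_of_pos_left h2 (by linarith)
          _ = Real.sin (Real.pi / (2 * (n:ℝ))) / 2 := by
              field_simp
      calc ((n : ℝ) - 1) * ((q / Complex.normSq (symbolC x 1)) ^ m
            * Complex.normSq (symbolC x 1) ^ m)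
          = (((n : ℝ) - 1) * (q / Complex.normSq (symbolC x 1)) ^ m)
            * Complex.normSq (symbolC x 1) ^ m := by ring
        _ < (Real.sin (Real.pi / (2 * (n:ℝ))) / 2) * Complex.normSq (symbolC x 1) ^ m := by
            apply mul_lt_mul_of_pos_right step hApos
        _ = Complex.normSq (symbolC x 1) ^ m * Real.sin (Real.pi / (2 * (n:ℝ))) / 2 := by ring
    obtain ⟨hz0, hargz⟩ := S16.disc_lemma hApos hα hα2
      ((n : ℂ) * (((circulantC x)ᴴ * circulantC x) ^ m) ⟨0, by omega⟩ j)
      (lt_of_le_of_lt hbound hrad)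
    have hb0 : (((circulantC x)ᴴ * circulantC x) ^ m) ⟨0, by omega⟩ j ≠ 0 := by
      intro h0
      apply hz0
      rw [h0, mul_zero]
    have hargeq : Complex.arg ((n : ℂ)
          * (((circulantC x)ᴴ * circulantC x) ^ m) ⟨0, by omega⟩ j)
        = Complex.arg ((((circulantC x)ᴴ * circulantC x) ^ m) ⟨0, by omega⟩ j) := by
      have hcast : ((n : ℂ)) = (((n : ℝ) : ℂ)) := by push_cast; rfl
      rw [hcast]
      exact Complex.arg_real_mul _ (by positivity)
    rw [hargeq] at hargz
    exact ⟨hb0, hargz⟩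
  tfae_finish
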